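/- arXiv:2406.13670 — 3 statements merged into one kernel-verified Lean document; each statement's English description precedes it below -/
import Mathlib

section
/- Let Δ be a pure simplicial forest whose facets have cardinality at least 2, and let 1 ≤ k < ν₀(Δ). Then I(Δ)^{[k]} is not linearly related: there exist minimal monomial generators u and v of I(Δ)^{[k]} that are not connected by a path in G^{(u,v)}_{I(Δ)^{[k]}}. -/
noncomputable section

open Finset MvPolynomial

/-- A simplicial complex on the vertex type `V`: a finite, nonempty collection of
finite subsets of `V` that is closed under taking subsets. -/
structure SimplicialComplex (V : Type) [DecidableEq V] : Type where
  faces : Finset (Finset V)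
  nonempty' : faces.Nonempty
  down_closed : ∀ ⦃F G : Finset V⦄, F ∈ faces → G ⊆ F → G ∈ faces

namespace SimplicialComplex

variable {V : Type} [DecidableEq V]

open scoped Classical in
/-- The facets: the maximal faces with respect to inclusion. -/
def facets (Δ : SimplicialComplex V) : Finset (Finset V) :=
  Δ.faces.filter fun F => ∀ G ∈ Δ.faces, F ⊆ G → F = G

/-- A matching: a set of pairwise disjoint facets. -/
def IsMatching (Δ : SimplicialComplex V) (M : Finset (Finset V)) : Prop :=
  M ⊆ Δ.facets ∧ ∀ F ∈ M, ∀ G ∈ M, F ≠ G → F ∩ G = ∅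

/-- The matching number `ν(Δ)`: the maximum cardinality of a matching. -/
def matchingNumber (Δ : SimplicialComplex V) : ℕ :=
  sSup {r : ℕ | ∃ M : Finset (Finset V), Δ.IsMatching M ∧ M.card = r}

/-- `F` is a leaf of the subcomplex generated by the facet set `S`: either `F` is
the only facet, or there is another facet `G` with `H ∩ F ⊆ G ∩ F` for all
facets `H ≠ F`. -/
def IsLeafIn (S : Finset (Finset V)) (F : Finset V) : Prop :=
  F ∈ S ∧ (S = {F} ∨ ∃ G ∈ S, G ≠ F ∧ ∀ H ∈ S, H ≠ F → H ∩ F ⊆ G ∩ F)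

/-- A simplicial forest: every nonempty subcomplex has a leaf (equivalently,
every connected component is a simplicial tree). -/
def IsForest (Δ : SimplicialComplex V) : Prop :=
  ∀ S ⊆ Δ.facets, S.Nonempty → ∃ F, IsLeafIn S F

/-- Connectedness: any two facets are joined by a chain of facets in which
consecutive facets intersect nontrivially. -/
def Connected (Δ : SimplicialComplex V) : Prop :=
  ∀ F ∈ Δ.facets, ∀ G ∈ Δ.facets,
    Relation.ReflTransGen
      (fun A B => A ∈ Δ.facets ∧ B ∈ Δ.facets ∧ (A ∩ B).Nonempty) F G

/-- A simplicial tree: a connected simplicial forest. -/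
def IsTree (Δ : SimplicialComplex V) : Prop := Δ.Connected ∧ Δ.IsForest

/-- A good leaf: a facet which is a leaf of every subcomplex containing it. -/
def IsGoodLeaf (Δ : SimplicialComplex V) (F : Finset V) : Prop :=
  F ∈ Δ.facets ∧ ∀ S ⊆ Δ.facets, F ∈ S → IsLeafIn S F

/-- Two disjoint facets `F`, `G` form a gap: the induced subcomplex on `F ∪ G`
has facet set exactly `{F, G}`. -/
def FormGap (Δ : SimplicialComplex V) (F G : Finset V) : Prop :=
  F ∈ Δ.facets ∧ G ∈ Δ.facets ∧ F ∩ G = ∅ ∧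
    ∀ H ∈ Δ.facets, H ⊆ F ∪ G → H = F ∨ H = G

/-- A restricted matching: a matching one of whose facets forms a gap with every
other facet of the matching. -/
def IsRestrictedMatching (Δ : SimplicialComplex V) (M : Finset (Finset V)) : Prop :=
  Δ.IsMatching M ∧ ∃ F ∈ M, ∀ G ∈ M, G ≠ F → Δ.FormGap F G

/-- The restricted matching number `ν₀(Δ)`. -/
def restrictedMatchingNumber (Δ : SimplicialComplex V) : ℕ :=
  sSup {r : ℕ | ∃ M : Finset (Finset V), Δ.IsRestrictedMatching M ∧ M.card = r}

/-- An induced matching: a matching `M` such that the facets contained in the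
union of the members of `M` are exactly the members of `M`. -/
def IsInducedMatching (Δ : SimplicialComplex V) (M : Finset (Finset V)) : Prop :=
  Δ.IsMatching M ∧ ∀ H ∈ Δ.facets, H ⊆ M.biUnion id → H ∈ M

/-- The induced matching number `ν₁(Δ)`. -/
def inducedMatchingNumber (Δ : SimplicialComplex V) : ℕ :=
  sSup {r : ℕ | ∃ M : Finset (Finset V), Δ.IsInducedMatching M ∧ M.card = r}

/-- A proper chain of length `n` between the facets `F` and `G`. -/
def ProperChain (Δ : SimplicialComplex V) (F G : Finset V) (n : ℕ) : Prop :=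
  ∃ c : ℕ → Finset V, c 0 = F ∧ c n = G ∧ (∀ i ≤ n, c i ∈ Δ.facets) ∧
    ∀ i < n, (c i ∩ c (i + 1)).card = (c (i + 1)).card - 1

/-- The distance between two facets: the minimal length of a proper chain. -/
def dist (Δ : SimplicialComplex V) (F G : Finset V) : ℕ :=
  sInf {n : ℕ | Δ.ProperChain F G n}

/-- The intersection property for a pure complex whose facets have cardinality
`t` (`= d + 1`): it is connected in codimension 1, and any two facets `F`, `G`
with `|F ∩ G| = t - k` (`1 ≤ k ≤ t`) satisfy `dist(F, G) = k`. -/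
def HasIntersectionProperty (Δ : SimplicialComplex V) (t : ℕ) : Prop :=
  (∀ F ∈ Δ.facets, F.card = t) ∧
    (∀ F ∈ Δ.facets, ∀ G ∈ Δ.facets, ∃ n, Δ.ProperChain F G n) ∧
    ∀ F ∈ Δ.facets, ∀ G ∈ Δ.facets, ∀ k, 1 ≤ k → k ≤ t →
      (F ∩ G).card = t - k → Δ.dist F G = k

end SimplicialComplex

/-- The simplicial complex generated by a finite family of faces. -/
def ofFacets {V : Type} [DecidableEq V] (ℱ : Finset (Finset V)) :
    SimplicialComplex V where
  faces := insert ∅ (ℱ.biUnion Finset.powerset)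
  nonempty' := ⟨∅, Finset.mem_insert_self _ _⟩
  down_closed := by
    intro F G hF hGF
    rcases Finset.mem_insert.mp hF with h | h
    · subst h
      exact Finset.mem_insert.mpr <| Or.inl (Finset.subset_empty.mp hGF)
    · rcases Finset.mem_biUnion.mp h with ⟨A, hA, hFA⟩
      exact Finset.mem_insert.mpr <| Or.inr <| Finset.mem_biUnion.mpr
        ⟨A, hA, Finset.mem_powerset.mpr (hGF.trans (Finset.mem_powerset.mp hFA))⟩

/-- The ideal of `K[x_v : v ∈ V]` generated by the products
`x_{F₁} ⋯ x_{F_k}` over all `k`-matchings `{F₁, …, F_k}` taken from the facet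
set `ℱ`.  For `ℱ = ℱ(Δ)` this is the `k`-th squarefree power `I(Δ)^{[k]}` of the
facet ideal `I(Δ)` (and the facet ideal itself for `k = 1`). -/
def matchPow (K : Type) [Field K] {V : Type} [DecidableEq V]
    (ℱ : Finset (Finset V)) (k : ℕ) : Ideal (MvPolynomial V K) :=
  Ideal.span {p | ∃ M : Finset (Finset V), M ⊆ ℱ ∧
    (∀ F ∈ M, ∀ G ∈ M, F ≠ G → F ∩ G = ∅) ∧ M.card = k ∧
    p = ∏ F ∈ M, ∏ v ∈ F, (X v : MvPolynomial V K)}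

/-- The `k`-th squarefree power `I(Δ)^{[k]}` of the facet ideal of `Δ`. -/
def sqfreePower (K : Type) [Field K] {V : Type} [DecidableEq V]
    (Δ : SimplicialComplex V) (k : ℕ) : Ideal (MvPolynomial V K) :=
  matchPow K Δ.facets k

/-- `p` is a monomial with coefficient `1`. -/
def IsMonomialOne {K : Type} [Field K] {V : Type} (p : MvPolynomial V K) : Prop :=
  ∃ d : V →₀ ℕ, p = monomial d 1

/-- `u` is a minimal monomial generator of the monomial ideal `I`: `u` is a
monomial of `I` which is not strictly divisible by any monomial of `I`. -/
def IsMinGen {K : Type} [Field K] {V : Type} (I : Ideal (MvPolynomial V K))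
    (u : MvPolynomial V K) : Prop :=
  IsMonomialOne u ∧ u ∈ I ∧
    ∀ v : MvPolynomial V K, IsMonomialOne v → v ∈ I → v ∣ u → v = u

/-- A monomial ideal `I` has linear quotients: its minimal monomial generators
can be listed as `f₁, …, f_m` so that each colon ideal
`(f₁, …, f_{i-1}) : (f_i)` is generated by a subset of the variables. -/
def HasLinearQuotients {K : Type} [Field K] {V : Type}
    (I : Ideal (MvPolynomial V K)) : Prop :=
  ∃ L : List (MvPolynomial V K), L.Nodup ∧ (∀ u, u ∈ L ↔ IsMinGen I u) ∧
    ∀ i : ℕ, ∀ hi : i < L.length, 1 ≤ i →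
      ∃ s : Set V,
        Submodule.colon (Ideal.span {q | q ∈ L.take i}) (Ideal.span {L.get ⟨i, hi⟩}) =
          Ideal.span ((fun v => (X v : MvPolynomial V K)) '' s)

/-- The degree of the monomial with exponent vector `d`. -/
def degOf {V : Type} (d : V →₀ ℕ) : ℕ := d.sum fun _ n => n

/-- The edge relation of the induced graph `G_I^{(u,v)}` of Bigdeli–Herzog–Zheng,
for a monomial ideal `I` generated in degree `d`, where `m` is the exponent
vector of `lcm(u, v)`: two minimal monomial generators (identified with their
exponent vectors) dividing `lcm(u, v)` are adjacent when their lcm has degree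
`d + 1`. -/
def EdgeRel (K : Type) [Field K] {V : Type} [DecidableEq V]
    (I : Ideal (MvPolynomial V K)) (d : ℕ) (m : V →₀ ℕ) (u v : V →₀ ℕ) : Prop :=
  IsMinGen I (monomial u (1 : K)) ∧ IsMinGen I (monomial v (1 : K)) ∧
    u ≤ m ∧ v ≤ m ∧ degOf (u ⊔ v) = d + 1

/-- The combinatorial criterion of Bigdeli–Herzog–Zheng for a monomial ideal `I`
generated in degree `d` to be linearly related: any two minimal monomial
generators `u`, `v` are connected by a path in `G_I^{(u,v)}`. -/
def LinearlyRelatedVia (K : Type) [Field K] {V : Type} [DecidableEq V]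
    (I : Ideal (MvPolynomial V K)) (d : ℕ) : Prop :=
  ∀ a b : V →₀ ℕ, IsMinGen I (monomial a (1 : K)) → IsMinGen I (monomial b (1 : K)) →
    Relation.ReflTransGen (EdgeRel K I d (a ⊔ b)) a b

/-- The `t`-path simplicial tree `Γ_{n,t}` of the path graph `P_n` on the
vertices `1, …, n`: its facets are the intervals `F_i = {i, …, i + t - 1}` for
`1 ≤ i ≤ n - t + 1`. -/
def pathFacets (n t : ℕ) : Finset (Finset ℕ) :=
  (Finset.Icc 1 (n - t + 1)).image fun i => Finset.Icc i (i + t - 1)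

/-- The `t`-path simplicial tree `Γ_{n,t}` of the path graph `P_n`. -/
def pathComplex (n t : ℕ) : SimplicialComplex ℕ := ofFacets (pathFacets n t)

/-!
Let `M` be a restricted matching with more than `k` facets and gap facet `F₀`, let `𝒢 ⊆ M \ {F₀}`
have `k` facets and let `g ∈ 𝒢`. Take `u` the generator of the matching `{F₀} ∪ 𝒢 \ {g}` and `v`
that of `𝒢`, so that `lcm(u, v)` is supported on `F₀ ∪ ⋃ 𝒢`. Every generator reachable from `u`
in `G^{(u,v)}` is divisible by `x_{F₀}`: a neighbour differs from it in one variable, so, as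
`|F₀| ≥ 2`, its matching meets `F₀`, and in a forest a `k`-matching inside `F₀ ∪ ⋃ 𝒢` that meets
`F₀` contains `F₀`. Since `x_{F₀}` does not divide `v`, there is no path from `u` to `v`.

The forest enters through a count of crossing pairs `(H, G)`, `H ∩ G ≠ ∅`, between two matchings:
there are fewer of them than facets, because their intersection graph is a forest. A facet of the
`k`-matching that is neither `F₀` nor in `𝒢` meets at least two members of `𝒢` (meeting just one
is ruled out by the gaps, meeting none by the maximality of `F₀`), which forces the matching to
have fewer than `k` facets.
-/

def crossings {V : Type} [DecidableEq V] (𝒜 ℬ : Finset (Finset V)) : ℕ :=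
  ∑ A ∈ 𝒜, #{B ∈ ℬ | ¬Disjoint A B}

lemma crossings_comm {V : Type} [DecidableEq V] (𝒜 ℬ : Finset (Finset V)) :
    crossings 𝒜 ℬ = crossings ℬ 𝒜 := by
  simp only [crossings, card_filter]
  rw [sum_comm]
  simp only [disjoint_comm]

namespace SimplicialComplex

variable {V : Type} [DecidableEq V] {Δ : SimplicialComplex V}

lemma IsMatching.mono {M N : Finset (Finset V)} (hM : Δ.IsMatching M) (hNM : N ⊆ M) :
    Δ.IsMatching N :=
  ⟨hNM.trans hM.1, fun F hF G hG => hM.2 F (hNM hF) G (hNM hG)⟩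

lemma IsMatching.pairwiseDisjoint {M : Finset (Finset V)} (hM : Δ.IsMatching M) :
    (M : Set (Finset V)).PairwiseDisjoint id :=
  fun F hF G hG hFG => disjoint_iff_inter_eq_empty.mpr (hM.2 F hF G hG hFG)

lemma IsMatching.card_biUnion {M : Finset (Finset V)} {t : ℕ} (hM : Δ.IsMatching M)
    (hpure : ∀ F ∈ Δ.facets, F.card = t) : #(M.biUnion id) = #M * t := by
  rw [Finset.card_biUnion hM.pairwiseDisjoint]
  exact sum_const_nat fun F hF => hpure F (hM.1 hF)

lemma eq_of_mem_facets_of_subset {F G : Finset V} (hF : F ∈ Δ.facets) (hG : G ∈ Δ.facets)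
    (hFG : F ⊆ G) : F = G :=
  (mem_filter.mp hF).2 G (mem_filter.mp hG).1 hFG

lemma FormGap.disjoint {F G : Finset V} (h : Δ.FormGap F G) : Disjoint F G :=
  disjoint_iff_inter_eq_empty.mpr h.2.2.1

lemma not_subset_biUnion_of_formGap {F₀ : Finset V} {𝒢 : Finset (Finset V)} (hF₀ : F₀.Nonempty)
    (hgap : ∀ G ∈ 𝒢, Δ.FormGap F₀ G) : ¬F₀ ⊆ 𝒢.biUnion id := fun hsub =>
  hF₀.ne_empty <| disjoint_self.mp <|
    ((disjoint_biUnion_right _ _ _).mpr fun G hG => (hgap G hG).disjoint).mono_right hsub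

lemma exists_isRestrictedMatching_card_gt {k : ℕ} (hk : k < Δ.restrictedMatchingNumber) :
    ∃ M, Δ.IsRestrictedMatching M ∧ k < #M := by
  obtain ⟨_, ⟨M, hM, rfl⟩, hkM⟩ := exists_lt_of_lt_csSup' hk
  exact ⟨M, hM, hkM⟩

lemma IsLeafIn.card_filter_not_disjoint_le_one {𝒜 ℬ : Finset (Finset V)} {L : Finset V}
    (hL : IsLeafIn (𝒜 ∪ ℬ) L) (hL𝒜 : L ∈ 𝒜) (h𝒜 : (𝒜 : Set (Finset V)).PairwiseDisjoint id)
    (hℬ : (ℬ : Set (Finset V)).PairwiseDisjoint id) : #{B ∈ ℬ | ¬Disjoint L B} ≤ 1 := by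
  rw [card_le_one]
  intro B₁ hB₁ B₂ hB₂
  simp only [mem_filter] at hB₁ hB₂
  by_cases hLℬ : L ∈ ℬ
  · exact (hℬ.elim hLℬ hB₁.1 hB₁.2).symm.trans (hℬ.elim hLℬ hB₂.1 hB₂.2)
  obtain ⟨-, hsingle | ⟨J, hJ, hJL, hJ_le⟩⟩ := hL
  · have hB₁L : B₁ = L := mem_singleton.mp (hsingle ▸ mem_union_right _ hB₁.1)
    exact absurd (hB₁L ▸ hB₁.1) hLℬ
  -- a member of `ℬ` meeting `L` meets `J` inside `L`; hence `J ∉ 𝒜`, and the member is `J`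
  have hJ_eq : ∀ B ∈ ℬ, ¬Disjoint L B → B = J := by
    intro B hB hLB
    obtain ⟨x, hxL, hxB⟩ := not_disjoint_iff.mp hLB
    have hxJ : x ∈ J ∩ L :=
      hJ_le B (mem_union_right _ hB) (ne_of_mem_of_not_mem hB hLℬ) (mem_inter.mpr ⟨hxB, hxL⟩)
    have hJℬ : J ∈ ℬ := (mem_union.mp hJ).resolve_left fun hJ𝒜 =>
      hJL (h𝒜.elim hJ𝒜 hL𝒜 (not_disjoint_iff.mpr ⟨x, (mem_inter.mp hxJ).1, hxL⟩))
    exact hℬ.elim hB hJℬ (not_disjoint_iff.mpr ⟨x, hxB, (mem_inter.mp hxJ).1⟩)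
  exact (hJ_eq B₁ hB₁.1 hB₁.2).trans (hJ_eq B₂ hB₂.1 hB₂.2).symm

theorem IsForest.crossings_le (hΔ : Δ.IsForest) {𝒜 ℬ : Finset (Finset V)}
    (h𝒜 : Δ.IsMatching 𝒜) (hℬ : Δ.IsMatching ℬ) : crossings 𝒜 ℬ ≤ #𝒜 + #ℬ - 1 := by
  obtain ⟨n, hn⟩ : ∃ n, #𝒜 + #ℬ = n := ⟨_, rfl⟩
  induction n generalizing 𝒜 ℬ with
  | zero => simp [crossings, card_eq_zero.mp (by omega : #𝒜 = 0)]
  | succ n ih =>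
    rw [hn, Nat.add_sub_cancel]
    have erase_leaf : ∀ 𝒜 ℬ : Finset (Finset V), Δ.IsMatching 𝒜 → Δ.IsMatching ℬ →
        #𝒜 + #ℬ = n + 1 → ∀ L, IsLeafIn (𝒜 ∪ ℬ) L → L ∈ 𝒜 → crossings 𝒜 ℬ ≤ n := by
      intro 𝒜 ℬ h𝒜 hℬ hn L hL hL𝒜
      have hL_le_one := hL.card_filter_not_disjoint_le_one hL𝒜 h𝒜.pairwiseDisjoint
        hℬ.pairwiseDisjoint
      have hL_le_card : #{B ∈ ℬ | ¬Disjoint L B} ≤ #ℬ := card_filter_le _ _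
      have hcard_erase : #(𝒜.erase L) + 1 = #𝒜 := card_erase_add_one hL𝒜
      have hrest := ih (h𝒜.mono (erase_subset L 𝒜)) hℬ (by omega)
      rw [crossings, ← add_sum_erase _ _ hL𝒜]
      change _ + crossings (𝒜.erase L) ℬ ≤ n
      omega
    obtain ⟨L, hL⟩ := hΔ (𝒜 ∪ ℬ) (union_subset h𝒜.1 hℬ.1)
      (by rw [nonempty_iff_ne_empty]; rintro h; simp_all)
    rcases mem_union.mp hL.1 with hL𝒜 | hLℬ
    · exact erase_leaf 𝒜 ℬ h𝒜 hℬ hn L hL hL𝒜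
    · rw [crossings_comm]
      exact erase_leaf ℬ 𝒜 hℬ h𝒜 (by omega) L (union_comm 𝒜 ℬ ▸ hL) hLℬ

theorem two_le_card_filter_not_disjoint {F₀ H : Finset V} {𝒢 : Finset (Finset V)}
    (hF₀ : F₀ ∈ Δ.facets) (hgap : ∀ G ∈ 𝒢, Δ.FormGap F₀ G) (hH : H ∈ Δ.facets)
    (hHF₀ : H ≠ F₀) (hH𝒢 : H ∉ 𝒢) (hsub : H ⊆ F₀ ∪ 𝒢.biUnion id) :
    2 ≤ #{G ∈ 𝒢 | ¬Disjoint H G} := by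
  set 𝒩 := {G ∈ 𝒢 | ¬Disjoint H G}
  have hH𝒩 : H ⊆ F₀ ∪ 𝒩.biUnion id := by
    intro x hx
    rcases mem_union.mp (hsub hx) with hxF₀ | hx𝒢
    · exact mem_union_left _ hxF₀
    · obtain ⟨G, hG, hxG⟩ := mem_biUnion.mp hx𝒢
      exact mem_union_right _ <| mem_biUnion.mpr
        ⟨G, mem_filter.mpr ⟨hG, not_disjoint_iff.mpr ⟨x, hx, hxG⟩⟩, hxG⟩
  by_contra! h𝒩
  obtain h𝒩 | h𝒩 : #𝒩 = 0 ∨ #𝒩 = 1 := by omega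
  · rw [card_eq_zero.mp h𝒩, biUnion_empty, union_empty] at hH𝒩
    exact hHF₀ (eq_of_mem_facets_of_subset hH hF₀ hH𝒩)
  · obtain ⟨G, hG⟩ := card_eq_one.mp h𝒩
    have hG𝒢 : G ∈ 𝒢 := (mem_filter.mp (hG ▸ mem_singleton_self G)).1
    rw [hG, singleton_biUnion] at hH𝒩
    rcases (hgap G hG𝒢).2.2.2 H hH hH𝒩 with rfl | rfl
    exacts [hHF₀ rfl, hH𝒢 hG𝒢]

theorem IsForest.mem_of_isMatching_subset (hΔ : Δ.IsForest) {F₀ : Finset V}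
    {𝒢 ℋ : Finset (Finset V)} (hF₀ : F₀ ∈ Δ.facets) (h𝒢 : Δ.IsMatching 𝒢)
    (hgap : ∀ G ∈ 𝒢, Δ.FormGap F₀ G) (hℋ : Δ.IsMatching ℋ)
    (hsub : ∀ H ∈ ℋ, H ⊆ F₀ ∪ 𝒢.biUnion id) (hmeet : ∃ H ∈ ℋ, ¬Disjoint H F₀)
    (hcard : #𝒢 ≤ #ℋ) : F₀ ∈ ℋ := by
  by_contra hF₀ℋ
  have htwo : ∀ H ∈ ℋ \ 𝒢, 2 ≤ #{G ∈ 𝒢 \ ℋ | ¬Disjoint H G} := by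
    intro H hH
    obtain ⟨hHℋ, hH𝒢⟩ := mem_sdiff.mp hH
    have hfilter : {G ∈ 𝒢 \ ℋ | ¬Disjoint H G} = {G ∈ 𝒢 | ¬Disjoint H G} := by
      ext G
      simp only [mem_filter, mem_sdiff]
      refine ⟨fun h => ⟨h.1.1, h.2⟩, fun h => ⟨⟨h.1, fun hGℋ => ?_⟩, h.2⟩⟩
      exact hH𝒢 (hℋ.pairwiseDisjoint.elim hHℋ hGℋ h.2 ▸ h.1)
    rw [hfilter]
    exact two_le_card_filter_not_disjoint hF₀ hgap (hℋ.1 hHℋ) (ne_of_mem_of_not_mem hHℋ hF₀ℋ)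
      hH𝒢 (hsub H hHℋ)
  have hlower : #(ℋ \ 𝒢) * 2 ≤ crossings (ℋ \ 𝒢) (𝒢 \ ℋ) := card_nsmul_le_sum _ _ 2 htwo
  have hupper : crossings (ℋ \ 𝒢) (𝒢 \ ℋ) ≤ _ :=
    hΔ.crossings_le (hℋ.mono sdiff_subset) (h𝒢.mono sdiff_subset)
  obtain ⟨H, hH, hHF₀⟩ := hmeet
  have hH𝒢 : H ∉ 𝒢 := fun hH𝒢 => hHF₀ (hgap H hH𝒢).disjoint.symm
  have hpos : 0 < #(ℋ \ 𝒢) := card_pos.mpr ⟨H, mem_sdiff.mpr ⟨hH, hH𝒢⟩⟩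
  have hℋ_card := card_sdiff_add_card_inter ℋ 𝒢
  have h𝒢_card := card_sdiff_add_card_inter 𝒢 ℋ
  rw [inter_comm] at h𝒢_card
  omega

end SimplicialComplex

section Monomials

variable {K : Type} [Field K] {V : Type} [DecidableEq V]

lemma toFinsupp_val_le_iff {A B : Finset V} :
    Multiset.toFinsupp A.val ≤ Multiset.toFinsupp B.val ↔ A ⊆ B := by
  rw [← val_le_iff, ← Finsupp.orderIsoMultiset.symm.le_iff_le]
  rfl

lemma toFinsupp_val_union (A B : Finset V) :
    Multiset.toFinsupp (A ∪ B).val = Multiset.toFinsupp A.val ⊔ Multiset.toFinsupp B.val := by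
  rw [union_val, Multiset.toFinsupp_union]

lemma degOf_toFinsupp_val (A : Finset V) : degOf (Multiset.toFinsupp A.val) = #A :=
  Multiset.toFinsupp_sum_eq A.val

lemma prod_X_eq_monomial {R : Type} [CommSemiring R] (A : Finset V) :
    ∏ v ∈ A, (X v : MvPolynomial V R) = monomial (Multiset.toFinsupp A.val) 1 := by
  induction A using Finset.induction_on with
  | empty => simp
  | insert a A ha ih =>
    rw [prod_insert ha, ih, insert_val_of_notMem ha, ← Multiset.singleton_add,
      Multiset.toFinsupp_add, Multiset.toFinsupp_singleton, X, monomial_mul, one_mul]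

theorem isMinGen_span_monomial_iff {S : Set (V →₀ ℕ)} {d : V →₀ ℕ} :
    IsMinGen (Ideal.span ((fun s => monomial s (1 : K)) '' S)) (monomial d 1) ↔
      d ∈ S ∧ ∀ s ∈ S, s ≤ d → s = d := by
  have hmem : ∀ e, monomial e (1 : K) ∈ Ideal.span ((fun s => monomial s 1) '' S) ↔
      ∃ s ∈ S, s ≤ e := by
    intro e
    simp [mem_ideal_span_monomial_image]
  constructor
  · rintro ⟨-, hd, hmin⟩
    have hle_eq : ∀ s ∈ S, s ≤ d → s = d := fun s hs hsd =>
      monomial_left_injective one_ne_zero <| hmin _ ⟨s, rfl⟩ ((hmem s).mpr ⟨s, hs, le_rfl⟩)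
        (monomial_dvd_monomial.mpr ⟨Or.inr hsd, dvd_rfl⟩)
    obtain ⟨s, hs, hsd⟩ := (hmem d).mp hd
    exact ⟨hle_eq s hs hsd ▸ hs, hle_eq⟩
  · rintro ⟨hd, hmin⟩
    refine ⟨⟨d, rfl⟩, (hmem d).mpr ⟨d, hd, le_rfl⟩, ?_⟩
    rintro _ ⟨e, rfl⟩ he hed
    obtain ⟨s, hs, hse⟩ := (hmem e).mp he
    have hed : e ≤ d := (monomial_dvd_monomial.mp hed).1.resolve_left one_ne_zero
    rw [le_antisymm hed (hmin s hs (hse.trans hed) ▸ hse)]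

variable (K) in
lemma sqfreePower_eq_span (Δ : SimplicialComplex V) (k : ℕ) :
    sqfreePower K Δ k = Ideal.span ((fun s => monomial s (1 : K)) ''
      {d | ∃ M, Δ.IsMatching M ∧ #M = k ∧ d = Multiset.toFinsupp (M.biUnion id).val}) := by
  have hprod : ∀ M : Finset (Finset V), Δ.IsMatching M →
      ∏ F ∈ M, ∏ v ∈ F, (X v : MvPolynomial V K) =
        monomial (Multiset.toFinsupp (M.biUnion id).val) 1 := fun M hM => by
    rw [← prod_X_eq_monomial, prod_biUnion hM.pairwiseDisjoint]
    rfl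
  unfold sqfreePower matchPow
  congr 1
  ext p
  simp only [Set.mem_ofPred_eq, Set.mem_image]
  constructor
  · rintro ⟨M, hM𝓕, hdisj, hk, rfl⟩
    exact ⟨_, ⟨M, ⟨hM𝓕, hdisj⟩, hk, rfl⟩, (hprod M ⟨hM𝓕, hdisj⟩).symm⟩
  · rintro ⟨_, ⟨M, hM, hk, rfl⟩, rfl⟩
    exact ⟨M, hM.1, hM.2, hk, (hprod M hM).symm⟩

/-- For a pure complex the generators `x_{F₁} ⋯ x_{F_k}` all have degree `k t`, so none divides
another and all are minimal. -/
theorem isMinGen_sqfreePower_iff {Δ : SimplicialComplex V} {t k : ℕ}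
    (hpure : ∀ F ∈ Δ.facets, F.card = t) {d : V →₀ ℕ} :
    IsMinGen (sqfreePower K Δ k) (monomial d 1) ↔
      ∃ M, Δ.IsMatching M ∧ #M = k ∧ d = Multiset.toFinsupp (M.biUnion id).val := by
  rw [sqfreePower_eq_span, isMinGen_span_monomial_iff]
  refine ⟨And.left, fun hd => ⟨hd, fun s hs hsd => ?_⟩⟩
  have hdeg : ∀ e ∈ {d | ∃ M, Δ.IsMatching M ∧ #M = k ∧
      d = Multiset.toFinsupp (M.biUnion id).val}, degOf e = k * t := by
    rintro _ ⟨M, hM, hk, rfl⟩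
    rw [degOf_toFinsupp_val, hM.card_biUnion hpure, hk]
  by_contra hne
  have hlt : degOf s < degOf d := Finsupp.sum_id_lt_of_lt s d (lt_of_le_of_ne hsd hne)
  rw [hdeg s hs, hdeg d hd] at hlt
  exact lt_irrefl _ hlt

end Monomials

section Reachability

variable {K : Type} [Field K] {V : Type} [DecidableEq V] {Δ : SimplicialComplex V} {t k : ℕ}
  {F₀ : Finset V} {𝒢 : Finset (Finset V)} {m : V →₀ ℕ}

theorem EdgeRel.toFinsupp_le_of_toFinsupp_le (hΔ : Δ.IsForest) (ht : 2 ≤ t)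
    (hpure : ∀ F ∈ Δ.facets, F.card = t) (hF₀ : F₀ ∈ Δ.facets) (h𝒢 : Δ.IsMatching 𝒢)
    (hgap : ∀ G ∈ 𝒢, Δ.FormGap F₀ G) (h𝒢k : #𝒢 = k)
    (hm : m ≤ Multiset.toFinsupp (F₀ ∪ 𝒢.biUnion id).val) {p q : V →₀ ℕ}
    (hpq : EdgeRel K (sqfreePower K Δ k) (k * t) m p q)
    (hp : Multiset.toFinsupp F₀.val ≤ p) : Multiset.toFinsupp F₀.val ≤ q := by
  obtain ⟨hp_gen, hq_gen, -, hqm, hdeg⟩ := hpq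
  obtain ⟨P, -, -, rfl⟩ := (isMinGen_sqfreePower_iff hpure).mp hp_gen
  obtain ⟨Q, hQ, hQk, rfl⟩ := (isMinGen_sqfreePower_iff hpure).mp hq_gen
  rw [toFinsupp_val_le_iff] at hp ⊢
  rw [← toFinsupp_val_union, degOf_toFinsupp_val] at hdeg
  have hQ_sub : Q.biUnion id ⊆ F₀ ∪ 𝒢.biUnion id := toFinsupp_val_le_iff.mp (hqm.trans hm)
  -- `P` has a single vertex outside `Q`, so not all of the `t ≥ 2` vertices of `F₀ ⊆ P` avoid `Q`
  have hmeet : ∃ H ∈ Q, ¬Disjoint H F₀ := by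
    by_contra! hQ_F₀
    have hF₀_sdiff : F₀ ⊆ P.biUnion id \ Q.biUnion id :=
      subset_sdiff.mpr ⟨hp, ((disjoint_biUnion_left _ _ _).mpr hQ_F₀).symm⟩
    have h₁ := card_le_card hF₀_sdiff
    have h₂ := card_sdiff_add_card (P.biUnion id) (Q.biUnion id)
    have h₃ := hQ.card_biUnion hpure
    rw [hQk] at h₃
    have h₄ := hpure F₀ hF₀
    omega
  have hF₀Q := hΔ.mem_of_isMatching_subset hF₀ h𝒢 hgap hQ
    (fun H hH => (subset_biUnion_of_mem id hH).trans hQ_sub) hmeet (by omega)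
  exact subset_biUnion_of_mem id hF₀Q

theorem toFinsupp_le_of_reflTransGen_edgeRel (hΔ : Δ.IsForest) (ht : 2 ≤ t)
    (hpure : ∀ F ∈ Δ.facets, F.card = t) (hF₀ : F₀ ∈ Δ.facets) (h𝒢 : Δ.IsMatching 𝒢)
    (hgap : ∀ G ∈ 𝒢, Δ.FormGap F₀ G) (h𝒢k : #𝒢 = k)
    (hm : m ≤ Multiset.toFinsupp (F₀ ∪ 𝒢.biUnion id).val) {p q : V →₀ ℕ}
    (hpq : Relation.ReflTransGen (EdgeRel K (sqfreePower K Δ k) (k * t) m) p q)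
    (hp : Multiset.toFinsupp F₀.val ≤ p) : Multiset.toFinsupp F₀.val ≤ q := by
  induction hpq with
  | refl => exact hp
  | tail _ hedge ih =>
    exact hedge.toFinsupp_le_of_toFinsupp_le hΔ ht hpure hF₀ h𝒢 hgap h𝒢k hm ih

end Reachability

/-- For a pure simplicial forest whose facets have cardinality
`t ≥ 2` and `1 ≤ k < ν₀(Δ)`, the squarefree power `I(Δ)^{[k]}` is not linearly
related: some pair of minimal monomial generators `u`, `v` is not connected by
a path in `G^{(u,v)}_{I(Δ)^{[k]}}`. -/
theorem sqfreePower_not_linearly_related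
    (K : Type) [Field K] {V : Type} [DecidableEq V]
    (Δ : SimplicialComplex V) (hΔ : Δ.IsForest)
    (t : ℕ) (ht : 2 ≤ t) (hpure : ∀ F ∈ Δ.facets, F.card = t)
    (k : ℕ) (hk1 : 1 ≤ k) (hk2 : k < Δ.restrictedMatchingNumber) :
    ∃ a b : V →₀ ℕ,
      IsMinGen (sqfreePower K Δ k) (monomial a (1 : K)) ∧
      IsMinGen (sqfreePower K Δ k) (monomial b (1 : K)) ∧
      ¬ Relation.ReflTransGen (EdgeRel K (sqfreePower K Δ k) (k * t) (a ⊔ b)) a b := by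
  obtain ⟨M, ⟨hM, F₀, hF₀M, hgapM⟩, hkM⟩ := Δ.exists_isRestrictedMatching_card_gt hk2
  obtain ⟨𝒢, h𝒢M, h𝒢k⟩ := exists_subset_card_eq (s := M.erase F₀) (n := k)
    (by rw [card_erase_of_mem hF₀M]; omega)
  have hgap : ∀ G ∈ 𝒢, Δ.FormGap F₀ G := fun G hG =>
    hgapM G (mem_of_mem_erase (h𝒢M hG)) (ne_of_mem_erase (h𝒢M hG))
  have h𝒢 : Δ.IsMatching 𝒢 := hM.mono (h𝒢M.trans (erase_subset _ _))
  obtain ⟨g, hg⟩ : 𝒢.Nonempty := card_pos.mp (by omega)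
  set 𝒜 := insert F₀ (𝒢.erase g)
  have hF₀_erase : F₀ ∉ 𝒢.erase g := fun h => by simpa using h𝒢M (mem_of_mem_erase h)
  have h𝒜 : Δ.IsMatching 𝒜 := hM.mono <|
    insert_subset hF₀M (((erase_subset _ _).trans h𝒢M).trans (erase_subset _ _))
  have h𝒜k : #𝒜 = k := by rw [card_insert_of_notMem hF₀_erase, card_erase_of_mem hg]; omega
  refine ⟨_, _, (isMinGen_sqfreePower_iff hpure).mpr ⟨𝒜, h𝒜, h𝒜k, rfl⟩,
    (isMinGen_sqfreePower_iff hpure).mpr ⟨𝒢, h𝒢, h𝒢k, rfl⟩, fun hpath => ?_⟩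
  have hsup : Multiset.toFinsupp (𝒜.biUnion id).val ⊔ Multiset.toFinsupp (𝒢.biUnion id).val ≤
      Multiset.toFinsupp (F₀ ∪ 𝒢.biUnion id).val := by
    rw [← toFinsupp_val_union, toFinsupp_val_le_iff, biUnion_insert]
    exact union_subset (union_subset_union_right
      (biUnion_subset_biUnion_of_subset_left _ (erase_subset _ _))) subset_union_right
  have hF₀_le : Multiset.toFinsupp F₀.val ≤ Multiset.toFinsupp (𝒜.biUnion id).val := by
    rw [toFinsupp_val_le_iff, biUnion_insert]
    exact subset_union_left
  have hF₀_ne : F₀.Nonempty := card_pos.mp (by rw [hpure F₀ (hM.1 hF₀M)]; omega)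
  refine Δ.not_subset_biUnion_of_formGap hF₀_ne hgap ?_
  exact toFinsupp_val_le_iff.mp <| toFinsupp_le_of_reflTransGen_edgeRel hΔ ht hpure
    (hM.1 hF₀M) h𝒢 hgap h𝒢k hsup hpath hF₀_le

end
end

section
/- Let 2 ≤ t ≤ n, let 1 ≤ k ≤ ν(Γ_{n,t}), and set I = I_{n,t}^{[k]}. If m is the least common multiple of two minimal monomial generators of I with kt + 1 < deg(m) ≤ 2kt and deg(m) ≠ (k + 1)t, then the comparability graph of the open interval (1, m) of the lcm lattice L(I) is connected. -/
noncomputable section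

open Finset MvPolynomial

/-- The lcm lattice of a monomial ideal, realized by exponent vectors: the
least common multiples of finite subsets of the minimal monomial generators
(the lcm of the empty subset being `0`, the exponent vector of `1`); the order
is divisibility, i.e. the pointwise order on exponent vectors. -/
def lcmLattice (K : Type) [Field K] {V : Type} [DecidableEq V]
    (I : Ideal (MvPolynomial V K)) : Set (V →₀ ℕ) :=
  {d | ∃ S : Finset (V →₀ ℕ), (∀ e ∈ S, IsMinGen I (monomial e (1 : K))) ∧ d = S.sup id}

/-- The open interval `(1, m)` of the lcm lattice of `I`. -/
def openInterval (K : Type) [Field K] {V : Type} [DecidableEq V]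
    (I : Ideal (MvPolynomial V K)) (m : V →₀ ℕ) : Set (V →₀ ℕ) :=
  {v | v ∈ lcmLattice K I ∧ v ≠ 0 ∧ v ≠ m ∧ v ≤ m}

/-!
The minimal generators of `I_{n,t}^{[k]}` are the squarefree monomials `x_U`, where `U` is the
vertex set of a `k`-matching of `Γ_{n,t}`, and `m = x_W` with `|W| = deg m`. Every element of
`(1, m)` lies above such a generator, and two generators `x_U`, `x_{U'}` with `U ∪ U' ≠ W` are
both comparable to their lcm, which lies in `(1, m)`. So it suffices to link any two matchings
inside `W` by such steps. Compare their facets from the left: at the first initial vertex `x` of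
one matching that the other lacks, slide the next facet of the other matching left to start at
`x`; if that would fill all of `W`, slide it one step left only. This is possible because then
the two facets overlap (`|W| ≠ (k + 1) t`), and the union gains a single vertex, so it misses
part of `W` (`|W| > kt + 1`). The sum of initial vertices decreases, so the process ends.
-/

section SqfreeExp

variable {V : Type} [DecidableEq V]

def sqfreeExp (U : Finset V) : V →₀ ℕ := Multiset.toFinsupp U.val

theorem sqfreeExp_le_sqfreeExp {U W : Finset V} : sqfreeExp U ≤ sqfreeExp W ↔ U ⊆ W :=
  (Finsupp.orderIsoMultiset.symm.le_iff_le).trans Finset.val_le_iff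

theorem sqfreeExp_injective : Function.Injective (sqfreeExp (V := V)) := fun _ _ h =>
  (sqfreeExp_le_sqfreeExp.1 h.le).antisymm (sqfreeExp_le_sqfreeExp.1 h.ge)

theorem sqfreeExp_union (U W : Finset V) : sqfreeExp (U ∪ W) = sqfreeExp U ⊔ sqfreeExp W := by
  rw [sqfreeExp, Finset.union_val, Multiset.toFinsupp_union]; rfl

theorem degOf_sqfreeExp (U : Finset V) : degOf (sqfreeExp U) = U.card :=
  Multiset.toFinsupp_sum_eq U.val

theorem sqfreeExp_ne_zero {U : Finset V} (hU : U.Nonempty) : sqfreeExp U ≠ 0 := by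
  rw [sqfreeExp, Ne, AddEquivClass.map_eq_zero_iff, Finset.val_eq_zero]
  exact hU.ne_empty

theorem prod_X_eq_monomial_sqfreeExp {K : Type} [Field K] (U : Finset V) :
    ∏ v ∈ U, (X v : MvPolynomial V K) = monomial (sqfreeExp U) 1 := by
  have : sqfreeExp U = ∑ v ∈ U, Finsupp.single v 1 := by
    conv_lhs => rw [sqfreeExp, ← Multiset.sum_map_singleton U.val]
    simp_rw [← Multiset.toFinsupp_singleton]
    exact map_sum Multiset.toFinsupp (fun v => {v}) U
  rw [this, monomial_sum_one]; rfl

end SqfreeExp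

theorem degOf_strictMono {V : Type} : StrictMono (degOf (V := V)) := fun d e h =>
  Finsupp.sum_id_lt_of_lt d e h

theorem isAntichain_of_degOf_eq {V : Type} {G : Set (V →₀ ℕ)} {d : ℕ}
    (hG : ∀ e ∈ G, degOf e = d) : IsAntichain (· ≤ ·) G :=
  fun e he f hf hne hle =>
    (degOf_strictMono (lt_of_le_of_ne hle hne)).ne (by rw [hG e he, hG f hf])

theorem isMinGen_span_monomial_iff_s11 {K : Type} [Field K] {V : Type} {G : Set (V →₀ ℕ)}
    (hG : IsAntichain (· ≤ ·) G) {a : V →₀ ℕ} :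
    IsMinGen (Ideal.span ((fun e => monomial e (1 : K)) '' G)) (monomial a 1) ↔ a ∈ G := by
  have hmem (b : V →₀ ℕ) :
      monomial b (1 : K) ∈ Ideal.span ((fun e => monomial e (1 : K)) '' G) ↔
        ∃ g ∈ G, g ≤ b := by
    classical
    rw [mem_ideal_span_monomial_image, support_monomial, if_neg one_ne_zero]
    simp
  have hdvd {b c : V →₀ ℕ} : monomial b (1 : K) ∣ monomial c 1 ↔ b ≤ c := by
    simp [monomial_dvd_monomial]
  constructor
  · rintro ⟨-, ha, hmin⟩
    obtain ⟨g, hg, hga⟩ := (hmem a).1 ha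
    have hgeq := hmin _ ⟨g, rfl⟩ ((hmem g).2 ⟨g, hg, le_rfl⟩) (hdvd.2 hga)
    rwa [← monomial_left_injective one_ne_zero hgeq]
  · intro ha
    refine ⟨⟨a, rfl⟩, (hmem a).2 ⟨a, ha, le_rfl⟩, ?_⟩
    rintro _ ⟨b, rfl⟩ hb hba
    obtain ⟨g, hg, hgb⟩ := (hmem b).1 hb
    have hga : g = a := hG.eq hg ha (hgb.trans (hdvd.1 hba))
    rw [le_antisymm (hdvd.1 hba) (hga ▸ hgb)]

section Comparability

variable {α : Type*} [PartialOrder α]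

def comparabilityAdj (s : Set α) (p q : α) : Prop :=
  p ∈ s ∧ q ∈ s ∧ p ≠ q ∧ (p ≤ q ∨ q ≤ p)

theorem reflTransGen_comparabilityAdj {s : Set α} {p q : α} (hp : p ∈ s) (hq : q ∈ s)
    (h : p ≤ q ∨ q ≤ p) : Relation.ReflTransGen (comparabilityAdj s) p q := by
  obtain rfl | hpq := eq_or_ne p q
  · rfl
  · exact .single ⟨hp, hq, hpq, h⟩

def joinAdj {β : Type*} [SemilatticeSup β] (s : Set β) (m p q : β) : Prop :=
  p ∈ s ∧ q ∈ s ∧ p ⊔ q ≠ m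

end Comparability

section LcmLattice

variable {K : Type} [Field K] {V : Type} [DecidableEq V] {I : Ideal (MvPolynomial V K)}
  {m : V →₀ ℕ}

theorem sup_mem_lcmLattice {g h : V →₀ ℕ} (hg : g ∈ lcmLattice K I)
    (hh : h ∈ lcmLattice K I) :
    g ⊔ h ∈ lcmLattice K I := by
  obtain ⟨S, hS, rfl⟩ := hg
  obtain ⟨T, hT, rfl⟩ := hh
  refine ⟨S ∪ T, fun e he => ?_, (Finset.sup_union).symm⟩
  rcases Finset.mem_union.1 he with he | he
  exacts [hS e he, hT e he]

theorem sup_mem_openInterval {g h : V →₀ ℕ} (hg : g ∈ openInterval K I m)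
    (hh : h ∈ openInterval K I m) (hne : g ⊔ h ≠ m) : g ⊔ h ∈ openInterval K I m :=
  ⟨sup_mem_lcmLattice hg.1 hh.1,
    fun h0 => hg.2.1 (nonpos_iff_eq_zero.1 (le_sup_left.trans_eq h0)), hne,
    sup_le hg.2.2.2 hh.2.2.2⟩

theorem reflTransGen_comparabilityAdj_of_joinAdj {g h : V →₀ ℕ}
    (hgh : Relation.ReflTransGen (joinAdj (openInterval K I m) m) g h) :
    Relation.ReflTransGen (comparabilityAdj (openInterval K I m)) g h := by
  refine Relation.reflTransGen_closed ?_ _ _ hgh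
  rintro g h ⟨hg, hh, hne⟩
  have hsup := sup_mem_openInterval hg hh hne
  exact (reflTransGen_comparabilityAdj hg hsup (.inl le_sup_left)).trans
    (reflTransGen_comparabilityAdj hsup hh (.inr le_sup_right))

theorem exists_minGen_le_of_mem_openInterval {u : V →₀ ℕ} (hu : u ∈ openInterval K I m) :
    ∃ g, IsMinGen I (monomial g (1 : K)) ∧ g ≤ u := by
  obtain ⟨⟨S, hS, rfl⟩, hu0, -⟩ := hu
  obtain ⟨g, hg⟩ : S.Nonempty := Finset.nonempty_iff_ne_empty.2 (by rintro rfl; exact hu0 rfl)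
  exact ⟨g, hS g hg, Finset.le_sup (f := id) hg⟩

theorem reflTransGen_comparabilityAdj_openInterval
    (hgen : ∀ e, IsMinGen I (monomial e (1 : K)) → e ≤ m → e ∈ openInterval K I m)
    (hjoin : ∀ e f, IsMinGen I (monomial e (1 : K)) → IsMinGen I (monomial f (1 : K)) →
      e ≤ m → f ≤ m → Relation.ReflTransGen (joinAdj (openInterval K I m) m) e f)
    {u v : V →₀ ℕ} (hu : u ∈ openInterval K I m) (hv : v ∈ openInterval K I m) :
    Relation.ReflTransGen (comparabilityAdj (openInterval K I m)) u v := by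
  obtain ⟨e, he, heu⟩ := exists_minGen_le_of_mem_openInterval hu
  obtain ⟨f, hf, hfv⟩ := exists_minGen_le_of_mem_openInterval hv
  have hem : e ≤ m := heu.trans hu.2.2.2
  have hfm : f ≤ m := hfv.trans hv.2.2.2
  exact (reflTransGen_comparabilityAdj hu (hgen e he hem) (.inr heu)).trans <|
    (reflTransGen_comparabilityAdj_of_joinAdj (hjoin e f he hf hem hfm)).trans <|
      reflTransGen_comparabilityAdj (hgen f hf hfm) hv (.inl hfv)

end LcmLattice

theorem facets_ofFacets {V : Type} [DecidableEq V] {ℱ : Finset (Finset V)} (hne : ℱ.Nonempty)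
    (hℱ : IsAntichain (· ⊆ ·) (ℱ : Set (Finset V))) : (ofFacets ℱ).facets = ℱ := by
  have hface {F : Finset V} : F ∈ (ofFacets ℱ).faces ↔ F = ∅ ∨ ∃ A ∈ ℱ, F ⊆ A := by
    simp [ofFacets]
  have hmemℱ {A : Finset V} (hA : A ∈ ℱ) : A ∈ (ofFacets ℱ).faces :=
    hface.2 (.inr ⟨A, hA, le_rfl⟩)
  ext F
  simp only [SimplicialComplex.facets, Finset.mem_filter]
  constructor
  · rintro ⟨hF, hmax⟩
    obtain ⟨A, hA, hFA⟩ : ∃ A ∈ ℱ, F ⊆ A := by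
      rcases hface.1 hF with rfl | h
      exacts [⟨hne.choose, hne.choose_spec, Finset.empty_subset _⟩, h]
    exact hmax A (hmemℱ hA) hFA ▸ hA
  · intro hF
    refine ⟨hmemℱ hF, fun G hG hFG => ?_⟩
    rcases hface.1 hG with rfl | ⟨A, hA, hGA⟩
    · exact Finset.subset_empty.1 hFG
    · exact hFG.antisymm (hℱ.eq hF hA (hFG.trans hGA) ▸ hGA)

def pathFacet (t i : ℕ) : Finset ℕ := Icc i (i + t - 1)

section PathFacets

variable {n t k : ℕ}

theorem mem_pathFacet (ht : 1 ≤ t) {i c : ℕ} : c ∈ pathFacet t i ↔ i ≤ c ∧ c < i + t := by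
  rw [pathFacet, mem_Icc]
  omega

theorem card_pathFacet (ht : 1 ≤ t) (i : ℕ) : (pathFacet t i).card = t := by
  rw [pathFacet, Nat.card_Icc]
  omega

theorem disjoint_pathFacet_iff (ht : 1 ≤ t) {i j : ℕ} :
    Disjoint (pathFacet t i) (pathFacet t j) ↔ i + t ≤ j ∨ j + t ≤ i := by
  simp only [Finset.disjoint_left, mem_pathFacet ht]
  constructor
  · intro h
    by_contra! hij
    exact h ⟨le_max_left i j, by omega⟩ ⟨le_max_right i j, by omega⟩
  · intro h c hci hcj
    omega

theorem pathFacet_injective (ht : 1 ≤ t) : Function.Injective (pathFacet t) := by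
  intro i j h
  have hi : i ∈ pathFacet t j := h ▸ (mem_pathFacet ht).2 ⟨le_rfl, by omega⟩
  have hj : j ∈ pathFacet t i := h ▸ (mem_pathFacet ht).2 ⟨le_rfl, by omega⟩
  rw [mem_pathFacet ht] at hi hj
  omega

theorem pathFacets_eq_image : pathFacets n t = (Icc 1 (n - t + 1)).image (pathFacet t) := rfl

theorem facets_pathComplex (ht : 1 ≤ t) : (pathComplex n t).facets = pathFacets n t :=
  facets_ofFacets ⟨_, mem_image_of_mem (pathFacet t) (left_mem_Icc.2 (Nat.le_add_left 1 _))⟩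
    (Set.Sized.isAntichain (r := t) fun _ hF => by
      obtain ⟨i, -, rfl⟩ := mem_image.1 hF
      exact card_pathFacet ht i)

def IsSpread (t : ℕ) (S : Finset ℕ) : Prop :=
  ∀ i ∈ S, ∀ j ∈ S, i < j → i + t ≤ j

/-- `S` is the set of initial vertices of the facets of a `k`-matching of `Γ_{n,t}`. -/
def IsMatchingStarts (n t k : ℕ) (S : Finset ℕ) : Prop :=
  S ⊆ Icc 1 (n - t + 1) ∧ IsSpread t S ∧ S.card = k

def facetUnion (t : ℕ) (S : Finset ℕ) : Finset ℕ := S.biUnion (pathFacet t)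

theorem IsSpread.pairwiseDisjoint (ht : 1 ≤ t) {S : Finset ℕ} (hS : IsSpread t S) :
    (S : Set ℕ).PairwiseDisjoint (pathFacet t) := by
  intro i hi j hj hij
  rw [Function.onFun, disjoint_pathFacet_iff ht]
  rcases hij.lt_or_gt with h | h
  exacts [.inl (hS i hi j hj h), .inr (hS j hj i hi h)]

theorem card_facetUnion (ht : 1 ≤ t) {S : Finset ℕ} (hS : IsSpread t S) :
    (facetUnion t S).card = S.card * t := by
  rw [facetUnion, card_biUnion (hS.pairwiseDisjoint ht)]
  simp [card_pathFacet ht]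

theorem prod_X_image_pathFacet {K : Type} [Field K] (ht : 1 ≤ t) {S : Finset ℕ}
    (hS : IsSpread t S) :
    ∏ F ∈ S.image (pathFacet t), ∏ v ∈ F, (X v : MvPolynomial ℕ K) =
      monomial (sqfreeExp (facetUnion t S)) 1 := by
  rw [prod_image fun i _ j _ h => pathFacet_injective ht h,
    ← prod_biUnion (hS.pairwiseDisjoint ht), prod_X_eq_monomial_sqfreeExp]
  rfl

theorem matchPow_pathFacets (K : Type) [Field K] (ht : 1 ≤ t) :
    matchPow K (pathFacets n t) k = Ideal.span ((fun e => monomial e (1 : K)) ''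
      {e | ∃ S, IsMatchingStarts n t k S ∧ e = sqfreeExp (facetUnion t S)}) := by
  rw [matchPow]
  congr 1
  ext p
  constructor
  · rintro ⟨M, hM, hdisj, hcard, rfl⟩
    rw [pathFacets_eq_image] at hM
    obtain ⟨S, hS, rfl⟩ := Finset.subset_image_iff.1 hM
    have hspread : IsSpread t S := fun i hi j hj hij =>
      ((disjoint_pathFacet_iff ht).1 <| disjoint_iff_inter_eq_empty.2 <|
        hdisj _ (mem_image_of_mem _ hi) _ (mem_image_of_mem _ hj)
          fun h => hij.ne (pathFacet_injective ht h)).resolve_right (by omega)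
    rw [card_image_of_injective _ (pathFacet_injective ht)] at hcard
    exact ⟨_, ⟨S, ⟨hS, hspread, hcard⟩, rfl⟩, (prod_X_image_pathFacet ht hspread).symm⟩
  · rintro ⟨_, ⟨S, ⟨hS, hspread, hcard⟩, rfl⟩, rfl⟩
    refine ⟨S.image (pathFacet t), image_subset_image hS, ?_,
      by rwa [card_image_of_injective _ (pathFacet_injective ht)],
      (prod_X_image_pathFacet ht hspread).symm⟩
    simp only [mem_image]
    rintro _ ⟨i, hi, rfl⟩ _ ⟨j, hj, rfl⟩ hij
    exact disjoint_iff_inter_eq_empty.1 <|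
      hspread.pairwiseDisjoint ht hi hj fun h => hij (congrArg _ h)

theorem isMinGen_matchPow_pathFacets_iff (K : Type) [Field K] (ht : 1 ≤ t) {a : ℕ →₀ ℕ} :
    IsMinGen (matchPow K (pathFacets n t) k) (monomial a 1) ↔
      ∃ S, IsMatchingStarts n t k S ∧ a = sqfreeExp (facetUnion t S) := by
  rw [matchPow_pathFacets K ht, isMinGen_span_monomial_iff_s11]
  · rfl
  · refine isAntichain_of_degOf_eq (d := k * t) ?_
    rintro _ ⟨S, hS, rfl⟩
    rw [degOf_sqfreeExp, card_facetUnion ht hS.2.1, hS.2.2]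

end PathFacets

section Sliding

variable {n t k : ℕ}

theorem facetUnion_insert (t v : ℕ) (S : Finset ℕ) :
    facetUnion t (insert v S) = pathFacet t v ∪ facetUnion t S :=
  biUnion_insert

theorem facetUnion_insert_erase_subset (t v y : ℕ) (S : Finset ℕ) :
    facetUnion t (insert v (S.erase y)) ⊆ pathFacet t v ∪ facetUnion t S := by
  rw [facetUnion_insert]
  exact union_subset_union subset_rfl
    (biUnion_subset_biUnion_of_subset_left _ (erase_subset y S))

theorem disjoint_pathFacet_facetUnion (ht : 1 ≤ t) {v : ℕ} {S : Finset ℕ}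
    (h : ∀ s ∈ S, v + t ≤ s ∨ s + t ≤ v) : Disjoint (pathFacet t v) (facetUnion t S) :=
  (disjoint_biUnion_right _ _ _).2 fun s hs => (disjoint_pathFacet_iff ht).2 (h s hs)

theorem IsMatchingStarts.slide (ht : 1 ≤ t) {S : Finset ℕ} (hS : IsMatchingStarts n t k S)
    {y v : ℕ} (hy : y ∈ S) (hv : 1 ≤ v) (hvy : v < y)
    (hbelow : ∀ s ∈ S, s < y → s + t ≤ v) :
    IsMatchingStarts n t k (insert v (S.erase y)) ∧
      ∑ s ∈ insert v (S.erase y), s < ∑ s ∈ S, s := by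
  obtain ⟨hSr, hSs, hSc⟩ := hS
  have hvS : v ∉ S.erase y := fun h => by
    have := hbelow v (mem_of_mem_erase h) hvy
    omega
  refine ⟨⟨fun s hs => ?_, fun i hi j hj hij => ?_, ?_⟩, ?_⟩
  · rcases mem_insert.1 hs with rfl | hs
    · have := mem_Icc.1 (hSr hy)
      exact mem_Icc.2 ⟨hv, by omega⟩
    · exact hSr (mem_of_mem_erase hs)
  · rcases mem_insert.1 hi with rfl | hi' <;> rcases mem_insert.1 hj with rfl | hj'
    · omega
    · rcases (ne_of_mem_erase hj').lt_or_gt with hjy | hjy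
      · have := hbelow j (mem_of_mem_erase hj') hjy
        omega
      · have := hSs y hy j (mem_of_mem_erase hj') hjy
        omega
    · exact hbelow i (mem_of_mem_erase hi') (by omega)
    · exact hSs i (mem_of_mem_erase hi') j (mem_of_mem_erase hj') hij
  · rw [card_insert_of_notMem hvS, card_erase_of_mem hy, ← hSc]
    have := card_pos.2 ⟨y, hy⟩
    omega
  · rw [sum_insert hvS, ← add_sum_erase S _ hy]
    omega

variable {W S T : Finset ℕ} {x : ℕ}

theorem exists_next_start (hS : IsMatchingStarts n t k S) (hT : IsMatchingStarts n t k T)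
    (hxT : x ∈ T) (hxS : x ∉ S) (hagree : ∀ s < x, s ∈ S → s ∈ T) :
    ∃ y ∈ S, x < y ∧ ∀ s ∈ S, s < y → s + t ≤ x := by
  have hlt : (S.filter (· < x)).card < S.card :=
    calc (S.filter (· < x)).card ≤ (T.erase x).card := card_le_card fun s hs => by
            rw [mem_filter] at hs
            exact mem_erase.2 ⟨hs.2.ne, hagree s hs.2 hs.1⟩
      _ < T.card := card_erase_lt_of_mem hxT
      _ = S.card := hT.2.2.trans hS.2.2.symm
  obtain ⟨z, hz, hzx⟩ := exists_mem_notMem_of_card_lt_card hlt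
  have hne : (S.filter (x < ·)).Nonempty :=
    ⟨z, mem_filter.2 ⟨hz, lt_of_le_of_ne (by simpa [hz] using hzx) fun h => hxS (h ▸ hz)⟩⟩
  obtain ⟨y, hy, hymin⟩ := (S.filter (x < ·)).exists_min_image id hne
  rw [mem_filter] at hy
  refine ⟨y, hy.1, hy.2, fun s hs hsy => ?_⟩
  have hsx : s < x := by
    by_contra! hxs
    have := hymin s (mem_filter.2 ⟨hs, lt_of_le_of_ne hxs (fun h => hxS (h ▸ hs))⟩)
    exact absurd hsy (not_lt.2 this)
  exact hT.2.1 s (hagree s hsx hs) x hxT hsx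

theorem exists_slide (ht : 1 ≤ t) (hW1 : k * t + 1 < W.card) (hW2 : W.card ≠ (k + 1) * t)
    (hS : IsMatchingStarts n t k S) (hT : IsMatchingStarts n t k T)
    (hSW : facetUnion t S ⊆ W) (hTW : facetUnion t T ⊆ W) (hxT : x ∈ T) (hxS : x ∉ S)
    (hagree : ∀ s < x, s ∈ S → s ∈ T) :
    ∃ S', IsMatchingStarts n t k S' ∧ ∑ s ∈ S', s < ∑ s ∈ S, s ∧
      facetUnion t S' ⊆ W ∧ facetUnion t S ∪ facetUnion t S' ≠ W := by
  obtain ⟨y, hy, hxy, hbelow⟩ := exists_next_start hS hT hxT hxS hagree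
  have hx1 : 1 ≤ x := (mem_Icc.1 (hT.1 hxT)).1
  have hxW : pathFacet t x ⊆ W := (subset_biUnion_of_mem _ hxT).trans hTW
  by_cases hfill : facetUnion t S ∪ pathFacet t x = W
  · have hyx : y < x + t := by
      by_contra! hyx
      have hdisj : Disjoint (pathFacet t x) (facetUnion t S) :=
        disjoint_pathFacet_facetUnion ht fun s hs => by
          rcases lt_or_ge s y with hsy | hys
          · exact .inr (hbelow s hs hsy)
          · rcases hys.eq_or_lt with rfl | hys
            · exact .inl hyx
            · have := hS.2.1 y hy s hs hys
              omega
      refine hW2 ?_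
      rw [← hfill, card_union_of_disjoint hdisj.symm, card_facetUnion ht hS.2.1,
        card_pathFacet ht, hS.2.2]
      ring
    obtain ⟨hS', hsum⟩ := hS.slide ht hy (v := y - 1) (by omega) (by omega)
      fun s hs hsy => (hbelow s hs hsy).trans (by omega)
    have hsub :
        facetUnion t (insert (y - 1) (S.erase y)) ⊆ insert (y - 1) (facetUnion t S) := by
      refine (facetUnion_insert_erase_subset t _ y S).trans
        (union_subset (fun c hc => ?_) (subset_insert _ _))
      rw [mem_pathFacet ht] at hc
      rcases eq_or_ne c (y - 1) with rfl | hc'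
      · exact mem_insert_self _ _
      · exact mem_insert_of_mem (subset_biUnion_of_mem _ hy ((mem_pathFacet ht).2 (by omega)))
    have hyW : y - 1 ∈ W := hxW ((mem_pathFacet ht).2 (by omega))
    refine ⟨_, hS', hsum, hsub.trans (insert_subset hyW hSW), fun h => ?_⟩
    have hW := card_le_card (h ▸ union_subset (subset_insert _ _) hsub)
    have := card_insert_le (y - 1) (facetUnion t S)
    rw [card_facetUnion ht hS.2.1, hS.2.2] at this
    omega
  · obtain ⟨hS', hsum⟩ := hS.slide ht hy hx1 hxy hbelow
    have hsub := facetUnion_insert_erase_subset t x y S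
    refine ⟨_, hS', hsum, hsub.trans (union_subset hxW hSW), fun h => hfill ?_⟩
    refine (union_subset hSW hxW).antisymm ?_
    rw [← h]
    exact union_subset subset_union_left
      (hsub.trans (union_subset subset_union_right subset_union_left))

def matchingVertexSets (n t k : ℕ) (W : Finset ℕ) : Set (Finset ℕ) :=
  {U | U ⊆ W ∧ ∃ S, IsMatchingStarts n t k S ∧ facetUnion t S = U}

theorem reflTransGen_joinAdj_matchingVertexSets (ht : 1 ≤ t) (hW1 : k * t + 1 < W.card)
    (hW2 : W.card ≠ (k + 1) * t) (hS : IsMatchingStarts n t k S) (hT : IsMatchingStarts n t k T)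
    (hSW : facetUnion t S ⊆ W) (hTW : facetUnion t T ⊆ W) :
    Relation.ReflTransGen (joinAdj (matchingVertexSets n t k W) W)
      (facetUnion t S) (facetUnion t T) := by
  induction hN : ∑ s ∈ S, s + ∑ s ∈ T, s using Nat.strong_induction_on generalizing S T with
  | _ N ih =>
  obtain rfl | hST := eq_or_ne S T
  · rfl
  obtain ⟨x, hx, hxmin⟩ := (symmDiff S T).exists_min_image id (symmDiff_nonempty.2 hST)
  have hagree (s : ℕ) (hsx : s < x) : s ∈ S ↔ s ∈ T := by
    by_contra h
    exact absurd (hxmin s (mem_symmDiff.2 (by tauto))) (not_le.2 hsx)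
  rcases mem_symmDiff.1 hx with ⟨hxS, hxT⟩ | ⟨hxT, hxS⟩
  · obtain ⟨T', hT', hsum, hT'W, hne⟩ :=
      exists_slide ht hW1 hW2 hT hS hTW hSW hxS hxT fun s hs => (hagree s hs).2
    refine (ih _ (by omega) hS hT' hSW hT'W rfl).tail
      ⟨⟨hT'W, T', hT', rfl⟩, ⟨hTW, T, hT, rfl⟩, ?_⟩
    rwa [sup_eq_union, union_comm]
  · obtain ⟨S', hS', hsum, hS'W, hne⟩ :=
      exists_slide ht hW1 hW2 hS hT hSW hTW hxT hxS fun s hs => (hagree s hs).1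
    exact (ih _ (by omega) hS' hT hS'W hTW rfl).head
      ⟨⟨hSW, S, hS, rfl⟩, ⟨hS'W, S', hS', rfl⟩, hne⟩

end Sliding

section PathInterval

variable (K : Type) [Field K] {n t k : ℕ} {W : Finset ℕ}

theorem sqfreeExp_mem_openInterval (ht : 1 ≤ t) (hk : 1 ≤ k) (hW : k * t < W.card)
    {U : Finset ℕ} (hU : U ∈ matchingVertexSets n t k W) :
    sqfreeExp U ∈ openInterval K (matchPow K (pathFacets n t) k) (sqfreeExp W) := by
  obtain ⟨hUW, S, hS, rfl⟩ := hU
  have hcard : (facetUnion t S).card = k * t := by rw [card_facetUnion ht hS.2.1, hS.2.2]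
  refine ⟨⟨{sqfreeExp (facetUnion t S)}, ?_, sup_singleton.symm⟩, sqfreeExp_ne_zero ?_,
    fun h => ?_, sqfreeExp_le_sqfreeExp.2 hUW⟩
  · simpa using (isMinGen_matchPow_pathFacets_iff K ht).2 ⟨S, hS, rfl⟩
  · rw [← card_pos, hcard]
    positivity
  · rw [sqfreeExp_injective h] at hcard
    omega

theorem mem_matchingVertexSets_of_isMinGen (ht : 1 ≤ t) {e : ℕ →₀ ℕ}
    (he : IsMinGen (matchPow K (pathFacets n t) k) (monomial e 1)) (heW : e ≤ sqfreeExp W) :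
    ∃ U ∈ matchingVertexSets n t k W, e = sqfreeExp U := by
  obtain ⟨S, hS, rfl⟩ := (isMinGen_matchPow_pathFacets_iff K ht).1 he
  exact ⟨_, ⟨sqfreeExp_le_sqfreeExp.1 heW, S, hS, rfl⟩, rfl⟩

theorem reflTransGen_joinAdj_openInterval (ht : 1 ≤ t) (hk : 1 ≤ k) (hW1 : k * t + 1 < W.card)
    (hW2 : W.card ≠ (k + 1) * t) {e f : ℕ →₀ ℕ}
    (he : IsMinGen (matchPow K (pathFacets n t) k) (monomial e 1))
    (hf : IsMinGen (matchPow K (pathFacets n t) k) (monomial f 1))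
    (heW : e ≤ sqfreeExp W) (hfW : f ≤ sqfreeExp W) :
    Relation.ReflTransGen
      (joinAdj (openInterval K (matchPow K (pathFacets n t) k) (sqfreeExp W)) (sqfreeExp W))
      e f := by
  obtain ⟨_, ⟨hSW, S, hS, rfl⟩, rfl⟩ := mem_matchingVertexSets_of_isMinGen K ht he heW
  obtain ⟨_, ⟨hTW, T, hT, rfl⟩, rfl⟩ := mem_matchingVertexSets_of_isMinGen K ht hf hfW
  refine (reflTransGen_joinAdj_matchingVertexSets ht hW1 hW2 hS hT hSW hTW).lift sqfreeExp ?_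
  rintro U U' ⟨hU, hU', hne⟩
  refine ⟨sqfreeExp_mem_openInterval K ht hk (by omega) hU,
    sqfreeExp_mem_openInterval K ht hk (by omega) hU', ?_⟩
  rw [← sqfreeExp_union]
  exact sqfreeExp_injective.ne hne

end PathInterval

theorem comparability_graph_of_interval_connected_general
    (K : Type) [Field K] (n t k : ℕ) (ht : 2 ≤ t)
    (hk1 : 1 ≤ k)
    (a b m : ℕ →₀ ℕ)
    (ha : IsMinGen (sqfreePower K (pathComplex n t) k) (monomial a (1 : K)))
    (hb : IsMinGen (sqfreePower K (pathComplex n t) k) (monomial b (1 : K)))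
    (hm : m = a ⊔ b)
    (hd1 : k * t + 1 < degOf m)
    (hd3 : degOf m ≠ (k + 1) * t) :
    ∀ u ∈ openInterval K (sqfreePower K (pathComplex n t) k) m,
      ∀ v ∈ openInterval K (sqfreePower K (pathComplex n t) k) m,
        Relation.ReflTransGen
          (fun p q => p ∈ openInterval K (sqfreePower K (pathComplex n t) k) m ∧
            q ∈ openInterval K (sqfreePower K (pathComplex n t) k) m ∧
            p ≠ q ∧ (p ≤ q ∨ q ≤ p)) u v := by
  have ht1 : 1 ≤ t := by omega
  rw [sqfreePower, facets_pathComplex ht1] at ha hb ⊢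
  obtain ⟨S, -, rfl⟩ := (isMinGen_matchPow_pathFacets_iff K ht1).1 ha
  obtain ⟨T, -, rfl⟩ := (isMinGen_matchPow_pathFacets_iff K ht1).1 hb
  rw [← sqfreeExp_union] at hm
  subst hm
  rw [degOf_sqfreeExp] at hd1 hd3
  intro u hu v hv
  refine reflTransGen_comparabilityAdj_openInterval (fun e he heW => ?_)
    (fun e f he hf => reflTransGen_joinAdj_openInterval K ht1 hk1 hd1 hd3 he hf) hu hv
  obtain ⟨U, hU, rfl⟩ := mem_matchingVertexSets_of_isMinGen K ht1 he heW
  exact sqfreeExp_mem_openInterval K ht1 hk1 (by omega) hU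

/-- For `I = I_{n,t}^{[k]}` and `m` the lcm of two minimal
monomial generators of `I` with `kt + 1 < deg m ≤ 2kt` and `deg m ≠ (k+1)t`,
the comparability graph of the open interval `(1, m)` of the lcm lattice of `I`
is connected. -/
theorem comparability_graph_of_interval_connected
    (K : Type) [Field K] (n t k : ℕ) (ht : 2 ≤ t) (htn : t ≤ n)
    (hk1 : 1 ≤ k) (hk2 : k ≤ (pathComplex n t).matchingNumber)
    (a b m : ℕ →₀ ℕ)
    (ha : IsMinGen (sqfreePower K (pathComplex n t) k) (monomial a (1 : K)))
    (hb : IsMinGen (sqfreePower K (pathComplex n t) k) (monomial b (1 : K)))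
    (hm : m = a ⊔ b)
    (hd1 : k * t + 1 < degOf m) (hd2 : degOf m ≤ 2 * (k * t))
    (hd3 : degOf m ≠ (k + 1) * t) :
    ∀ u ∈ openInterval K (sqfreePower K (pathComplex n t) k) m,
      ∀ v ∈ openInterval K (sqfreePower K (pathComplex n t) k) m,
        Relation.ReflTransGen
          (fun p q => p ∈ openInterval K (sqfreePower K (pathComplex n t) k) m ∧
            q ∈ openInterval K (sqfreePower K (pathComplex n t) k) m ∧
            p ≠ q ∧ (p ≤ q ∨ q ≤ p)) u v :=
  comparability_graph_of_interval_connected_general K n t k ht hk1 a b m ha hb hm hd1 hd3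

end
end

section
/- Let K be a field, 2 ≤ t ≤ n, and f_j = x_j x_{j+1} ⋯ x_{j+t−1} ∈ K[x₁, …, x_n] for 1 ≤ j ≤ n − t + 1. Then for every 2 ≤ i ≤ n − t + 1, the colon ideal (f₁, …, f_{i−1}) : (f_i) equals (f₁, …, f_{i−t−1}) + (x_{i−1}), where (f₁, …, f_{i−t−1}) is understood to be the zero ideal when i ≤ t + 1. -/
noncomputable section

open Finset MvPolynomial

/-!
All ideals involved are monomial ideals, so the colon ideal `(f₁, …, f_{i-1}) : (f_i)` is spanned
by the monomials `x^c` such that some `f_j` with `j < i` divides `x^c f_i`. The supports of `f_j`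
and `f_i` are intervals of length `t`. If they are disjoint, i.e. `j ≤ i - t - 1`, then
`f_j ∣ x^c`. Otherwise the interval of `f_j` contains `i - 1`, which is not in the interval of
`f_i`, so `x_{i-1} ∣ x^c`. Conversely `f_{i-1}` divides `x_{i-1} f_i`.
-/

namespace MvPolynomial

variable {σ R : Type*} [CommSemiring R]

theorem support_mul_monomial_one (p : MvPolynomial σ R) (e : σ →₀ ℕ) :
    (p * monomial e 1).support = p.support.map (addRightEmbedding e) :=
  AddMonoidAlgebra.support_coeff_mul_single p _ (by simp) _

theorem colon_span_monomial_image_eq {S T : Set (σ →₀ ℕ)} {e : σ →₀ ℕ}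
    (h : ∀ c, (∃ s ∈ S, s ≤ c + e) ↔ ∃ s ∈ T, s ≤ c) :
    (Ideal.span ((fun s => monomial s (1 : R)) '' S)).colon
        (Ideal.span {monomial e (1 : R)} : Set (MvPolynomial σ R)) =
      Ideal.span ((fun s => monomial s (1 : R)) '' T) := by
  ext p
  simp only [Ideal.mem_colon_span_singleton, mem_ideal_span_monomial_image,
    support_mul_monomial_one, Finset.mem_map, addRightEmbedding_apply, forall_exists_index,
    and_imp, forall_apply_eq_imp_iff₂, h]

theorem prod_X_eq_monomial_indicator (s : Finset σ) :
    ∏ i ∈ s, (X i : MvPolynomial σ R) = monomial (Finsupp.indicator s fun _ _ => 1) 1 := by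
  simpa using prod_X_pow (R := R) (fun _ => 1) s

end MvPolynomial

def pathExponent (t j : ℕ) : ℕ →₀ ℕ := Finsupp.indicator (Icc j (j + t - 1)) fun _ _ => 1

theorem prod_Icc_X_eq_monomial_pathExponent {R : Type*} [CommSemiring R] (t j : ℕ) :
    ∏ m ∈ Icc j (j + t - 1), (X m : MvPolynomial ℕ R) = monomial (pathExponent t j) 1 :=
  prod_X_eq_monomial_indicator _

theorem pathExponent_apply (t j m : ℕ) :
    pathExponent t j m = if j ≤ m ∧ m ≤ j + t - 1 then 1 else 0 := by
  simp [pathExponent, Finsupp.indicator_apply]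

theorem pathExponent_le_iff {t j : ℕ} {d : ℕ →₀ ℕ} :
    pathExponent t j ≤ d ↔ ∀ m, j ≤ m → m ≤ j + t - 1 → 1 ≤ d m := by
  simp only [Finsupp.le_def, pathExponent_apply]
  refine forall_congr' fun m => ?_
  split_ifs with hm
  · simp [hm]
  · simpa using fun h1 h2 => absurd ⟨h1, h2⟩ hm

theorem exists_pathExponent_le_add_iff {t i : ℕ} (hi : 2 ≤ i) (c : ℕ →₀ ℕ) :
    (∃ j ∈ Set.Icc 1 (i - 1), pathExponent t j ≤ c + pathExponent t i) ↔
      (∃ j ∈ Set.Icc 1 (i - t - 1), pathExponent t j ≤ c) ∨ Finsupp.single (i - 1) 1 ≤ c := by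
  simp only [pathExponent_le_iff, Finsupp.add_apply, pathExponent_apply, Finsupp.single_le_iff,
    Set.mem_Icc]
  constructor
  · rintro ⟨j, ⟨hj1, hji⟩, hle⟩
    by_cases hdisjoint : j + t ≤ i - 1
    · refine Or.inl ⟨j, ⟨hj1, by omega⟩, fun m h1 h2 => ?_⟩
      simpa [show ¬(i ≤ m ∧ m ≤ i + t - 1) by omega] using hle m h1 h2
    · have h := hle (i - 1) (by omega) (by omega)
      rw [if_neg (by omega), add_zero] at h
      exact Or.inr h
  · rintro (⟨j, ⟨hj1, hji⟩, hle⟩ | hc)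
    · exact ⟨j, ⟨hj1, by omega⟩, fun m h1 h2 => (hle m h1 h2).trans le_self_add⟩
    · refine ⟨i - 1, ⟨by omega, le_rfl⟩, fun m h1 h2 => ?_⟩
      by_cases hm : m = i - 1
      · subst hm; omega
      · simp [show i ≤ m ∧ m ≤ i + t - 1 by omega]

theorem colon_pathIdeal_generators_general
    (K : Type) [Field K] (t i : ℕ)
    (hi2 : 2 ≤ i) :
    Submodule.colon
        (Ideal.span ((fun j => ∏ m ∈ Finset.Icc j (j + t - 1), (X m : MvPolynomial ℕ K)) ''
          Set.Icc 1 (i - 1)))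
        (Ideal.span {∏ m ∈ Finset.Icc i (i + t - 1), (X m : MvPolynomial ℕ K)}) =
      Ideal.span
        ((fun j => ∏ m ∈ Finset.Icc j (j + t - 1), (X m : MvPolynomial ℕ K)) ''
            Set.Icc 1 (i - t - 1) ∪ {X (i - 1)}) := by
  simp_rw [prod_Icc_X_eq_monomial_pathExponent]
  rw [← Set.image_image (fun s => monomial s (1 : K)) (pathExponent t),
    ← Set.image_image (fun s => monomial s (1 : K)) (pathExponent t), X,
    ← Set.image_singleton (f := fun s => monomial s (1 : K)) (a := Finsupp.single (i - 1) 1),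
    ← Set.image_union]
  refine colon_span_monomial_image_eq fun c => ?_
  simpa [or_and_right, exists_or, or_comm] using exists_pathExponent_le_add_iff (t := t) hi2 c

/-- For `f_j = x_j x_{j+1} ⋯ x_{j+t-1}` and `2 ≤ i ≤ n-t+1`,
the colon ideal `(f₁, …, f_{i-1}) : (f_i)` equals
`(f₁, …, f_{i-t-1}) + (x_{i-1})` (the first summand being zero if `i ≤ t+1`). -/
theorem colon_pathIdeal_generators
    (K : Type) [Field K] (n t i : ℕ) (ht : 2 ≤ t) (htn : t ≤ n)
    (hi2 : 2 ≤ i) (hin : i ≤ n - t + 1) :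
    Submodule.colon
        (Ideal.span ((fun j => ∏ m ∈ Finset.Icc j (j + t - 1), (X m : MvPolynomial ℕ K)) ''
          Set.Icc 1 (i - 1)))
        (Ideal.span {∏ m ∈ Finset.Icc i (i + t - 1), (X m : MvPolynomial ℕ K)}) =
      Ideal.span
        ((fun j => ∏ m ∈ Finset.Icc j (j + t - 1), (X m : MvPolynomial ℕ K)) ''
            Set.Icc 1 (i - t - 1) ∪ {X (i - 1)}) :=
  colon_pathIdeal_generators_general K t i hi2

end
end
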